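/- arXiv:2302.07744 — 4 statements merged into one kernel-verified Lean document; each statement's English description precedes it below -/
import Mathlib

section
/- Let n : ℕ and l u : Fin n → ℝ with l i ≤ u i for every i, and let g : (Fin n → ℝ) → ℝ be convex on the box B(l,u). Then for every r : ℝ, one has g(x) ≤ r for all x ∈ B(l,u) if and only if g(v) ≤ r for all v in the vertex set V(l,u). (This is the claim that the convex tube constraints need only be imposed at the 2ⁿ vertices of each box cross-section.) -/
/-!
The box is the product of the segments `[l i, u i]`, hence the convex hull of its vertices, and a
convex function on a convex hull is bounded by its values on the generating set (maximum principle).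
-/

open Set

theorem ConvexOn.forall_mem_convexHull_le_iff {𝕜 E β : Type*} [Field 𝕜] [LinearOrder 𝕜]
    [IsStrictOrderedRing 𝕜] [AddCommGroup E] [AddCommGroup β] [LinearOrder β]
    [IsOrderedAddMonoid β] [Module 𝕜 E] [Module 𝕜 β] [IsStrictOrderedModule 𝕜 β]
    {s t : Set E} {f : E → β} (hf : ConvexOn 𝕜 s f) (hts : t ⊆ s) (r : β) :
    (∀ x ∈ convexHull 𝕜 t, f x ≤ r) ↔ ∀ y ∈ t, f y ≤ r := by
  refine ⟨fun H y hy ↦ H y (subset_convexHull 𝕜 t hy), fun H x hx ↦ ?_⟩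
  obtain ⟨y, hy, hxy⟩ := hf.exists_ge_of_mem_convexHull hts hx
  exact hxy.trans (H y hy)

theorem convexHull_univ_pi_pair {𝕜 ι : Type*} [Field 𝕜] [LinearOrder 𝕜] [IsStrictOrderedRing 𝕜]
    [Finite ι] {l u : ι → 𝕜} (h : l ≤ u) :
    convexHull 𝕜 (univ.pi fun i ↦ ({l i, u i} : Set 𝕜)) = Icc l u := by
  simp_rw [convexHull_pi, convexHull_pair, segment_eq_Icc (h _), pi_univ_Icc]

/-- A convex function on a box is bounded above by `r` on the whole box
iff it is bounded above by `r` at each of the box's vertices. -/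
theorem convex_le_on_box_iff_le_on_vertices
    (n : ℕ) (l u : Fin n → ℝ) (h : ∀ i, l i ≤ u i)
    (g : (Fin n → ℝ) → ℝ)
    (hg : ConvexOn ℝ {x : Fin n → ℝ | ∀ i, l i ≤ x i ∧ x i ≤ u i} g)
    (r : ℝ) :
    (∀ x ∈ {x : Fin n → ℝ | ∀ i, l i ≤ x i ∧ x i ≤ u i}, g x ≤ r) ↔
    (∀ v ∈ {x : Fin n → ℝ | ∀ i, x i = l i ∨ x i = u i}, g v ≤ r) := by
  have hhull : convexHull ℝ {x : Fin n → ℝ | ∀ i, x i = l i ∨ x i = u i}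
      = {x : Fin n → ℝ | ∀ i, l i ≤ x i ∧ x i ≤ u i} := by
    convert convexHull_univ_pi_pair (𝕜 := ℝ) h using 2 <;> ext x <;> simp [Pi.le_def, forall_and]
  rw [← hhull] at hg ⊢
  exact hg.forall_mem_convexHull_le_iff (subset_convexHull ℝ _) r
end

section
/- Let nx nu : ℕ, f : (Fin nx → ℝ) → (Fin nu → ℝ) → (Fin nx → ℝ), sets 𝒳 𝒳N ⊆ (Fin nx → ℝ)-space and 𝒰 ⊆ (Fin nu → ℝ)-space with 𝒳N ⊆ 𝒳, and κ : (Fin nx → ℝ) → (Fin nu → ℝ) such that for every x ∈ 𝒳N: κ(x) ∈ 𝒰 and f(x, κ(x)) ∈ 𝒳N (terminal invariance). Let N ≥ 1 and let x : ℕ → (Fin nx → ℝ), u : ℕ → (Fin nu → ℝ) satisfy: x(k+1) = f(x k, u k) for all k < N, x k ∈ 𝒳 for all k < N, u k ∈ 𝒰 for all k < N, and x N ∈ 𝒳N. Define the shifted sequences x⁺ k := x(k+1) for k < N, x⁺ N := f(x N, κ(x N)), u⁺ k := u(k+1) for k < N−1, and u⁺(N−1) := κ(x N). Then: x⁺(k+1)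 = f(x⁺ k, u⁺ k) for all k < N, x⁺ k ∈ 𝒳 for all k < N, u⁺ k ∈ 𝒰 for all k < N, and x⁺ N ∈ 𝒳N. (This is the shift-and-append argument underlying recursive feasibility of the MPC scheme, Theorem 1.) -/
/-!
The shifted trajectory agrees with the old one up to time `N`, so its first `N - 1` steps
inherit dynamics and constraints. The appended step starts from `x N ∈ 𝒳N ⊆ 𝒳` and uses the
terminal law `κ`, whose admissibility and invariance of `𝒳N` give the last input constraint
and the terminal constraint.
-/

structure IsFeasibleTrajectory {α β : Type*} (f : α → β → α) (𝒳 𝒳N : Set α) (𝒰 : Set β)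
    (N : ℕ) (x : ℕ → α) (u : ℕ → β) : Prop where
  dyn : ∀ k < N, x (k + 1) = f (x k) (u k)
  mem_state : ∀ k < N, x k ∈ 𝒳
  mem_input : ∀ k < N, u k ∈ 𝒰
  mem_terminal : x N ∈ 𝒳N

namespace IsFeasibleTrajectory

variable {α β : Type*} {f : α → β → α} {𝒳 𝒳N : Set α} {𝒰 : Set β} {κ : α → β} {N : ℕ}
  {x xp : ℕ → α} {u up : ℕ → β}

theorem shift_append (h : IsFeasibleTrajectory f 𝒳 𝒳N 𝒰 N x u) (h𝒳N : 𝒳N ⊆ 𝒳)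
    (hterm : ∀ x ∈ 𝒳N, κ x ∈ 𝒰 ∧ f x (κ x) ∈ 𝒳N)
    (hxp : ∀ k < N, xp k = x (k + 1)) (hxpN : xp N = f (x N) (κ (x N)))
    (hup : ∀ k < N - 1, up k = u (k + 1)) (hupN : up (N - 1) = κ (x N)) :
    IsFeasibleTrajectory f 𝒳 𝒳N 𝒰 N xp up where
  dyn k hk := by
    rcases (Nat.add_one_le_iff.mpr hk).lt_or_eq with hk1 | rfl
    · rw [hxp (k + 1) hk1, hxp k hk, hup k (by omega)]
      exact h.dyn (k + 1) hk1
    · rw [Nat.add_sub_cancel] at hupN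
      rw [hxpN, hxp k hk, hupN]
  mem_state k hk := by
    rw [hxp k hk]
    rcases (Nat.add_one_le_iff.mpr hk).lt_or_eq with hk1 | hk1
    · exact h.mem_state (k + 1) hk1
    · exact hk1 ▸ h𝒳N h.mem_terminal
  mem_input k hk := by
    rcases (Nat.add_one_le_iff.mpr hk).lt_or_eq with hk1 | hk1
    · rw [hup k (by omega)]
      exact h.mem_input (k + 1) hk1
    · rw [show k = N - 1 by omega, hupN]
      exact (hterm _ h.mem_terminal).1
  mem_terminal := hxpN ▸ (hterm _ h.mem_terminal).2

end IsFeasibleTrajectory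

theorem mpc_shift_and_append_feasible_general
    {nx nu : ℕ}
    (f : (Fin nx → ℝ) → (Fin nu → ℝ) → (Fin nx → ℝ))
    (𝒳 𝒳N : Set (Fin nx → ℝ)) (𝒰 : Set (Fin nu → ℝ))
    (h𝒳N : 𝒳N ⊆ 𝒳)
    (κ : (Fin nx → ℝ) → (Fin nu → ℝ))
    (hterm : ∀ x ∈ 𝒳N, κ x ∈ 𝒰 ∧ f x (κ x) ∈ 𝒳N)
    (N : ℕ)
    (x : ℕ → (Fin nx → ℝ)) (u : ℕ → (Fin nu → ℝ))
    (hdyn : ∀ k < N, x (k + 1) = f (x k) (u k))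
    (hx : ∀ k < N, x k ∈ 𝒳)
    (hu : ∀ k < N, u k ∈ 𝒰)
    (hxN : x N ∈ 𝒳N)
    (xp : ℕ → (Fin nx → ℝ)) (up : ℕ → (Fin nu → ℝ))
    (hxp : ∀ k < N, xp k = x (k + 1))
    (hxpN : xp N = f (x N) (κ (x N)))
    (hup : ∀ k < N - 1, up k = u (k + 1))
    (hupN : up (N - 1) = κ (x N)) :
    (∀ k < N, xp (k + 1) = f (xp k) (up k)) ∧
    (∀ k < N, xp k ∈ 𝒳) ∧
    (∀ k < N, up k ∈ 𝒰) ∧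
    xp N ∈ 𝒳N :=
  let h := (IsFeasibleTrajectory.mk hdyn hx hu hxN).shift_append h𝒳N hterm hxp hxpN hup hupN
  ⟨h.dyn, h.mem_state, h.mem_input, h.mem_terminal⟩

/-- Shift-and-append argument underlying recursive feasibility of MPC:
shifting a feasible trajectory and appending one step of the terminal control
law yields a feasible trajectory. -/
theorem mpc_shift_and_append_feasible
    {nx nu : ℕ}
    (f : (Fin nx → ℝ) → (Fin nu → ℝ) → (Fin nx → ℝ))
    (𝒳 𝒳N : Set (Fin nx → ℝ)) (𝒰 : Set (Fin nu → ℝ))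
    (h𝒳N : 𝒳N ⊆ 𝒳)
    (κ : (Fin nx → ℝ) → (Fin nu → ℝ))
    (hterm : ∀ x ∈ 𝒳N, κ x ∈ 𝒰 ∧ f x (κ x) ∈ 𝒳N)
    (N : ℕ) (hN : 1 ≤ N)
    (x : ℕ → (Fin nx → ℝ)) (u : ℕ → (Fin nu → ℝ))
    (hdyn : ∀ k < N, x (k + 1) = f (x k) (u k))
    (hx : ∀ k < N, x k ∈ 𝒳)
    (hu : ∀ k < N, u k ∈ 𝒰)
    (hxN : x N ∈ 𝒳N)
    (xp : ℕ → (Fin nx → ℝ)) (up : ℕ → (Fin nu → ℝ))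
    (hxp : ∀ k < N, xp k = x (k + 1))
    (hxpN : xp N = f (x N) (κ (x N)))
    (hup : ∀ k < N - 1, up k = u (k + 1))
    (hupN : up (N - 1) = κ (x N)) :
    (∀ k < N, xp (k + 1) = f (xp k) (up k)) ∧
    (∀ k < N, xp k ∈ 𝒳) ∧
    (∀ k < N, up k ∈ 𝒰) ∧
    xp N ∈ 𝒳N :=
  mpc_shift_and_append_feasible_general f 𝒳 𝒳N 𝒰 h𝒳N κ hterm N x u hdyn hx hu hxN xp up hxp hxpN hup
    hupN
end

section
/- Let nx nu N : ℕ with N ≥ 1, let Q Q_N : Matrix (Fin nx) (Fin nx) ℝ and R : Matrix (Fin nu) (Fin nu) ℝ, let xr : ℕ → (Fin nx → ℝ) and ur : ℕ → (Fin nu → ℝ) be reference sequences, let f : (Fin nx → ℝ) → (Fin nu → ℝ) → (Fin nx → ℝ) and κ : (Fin nx → ℝ) → (Fin nu → ℝ). Suppose x : ℕ → (Fin nx → ℝ) and u : ℕ → (Fin nu → ℝ) satisfy x(k+1) = f(x k, u k) for all k < N, and suppose the terminal decrease inequality holds at x N: ‖x N − xr N‖²_{Q_N} − ‖f(x N, κ(x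 N)) − xr(N+1)‖²_{Q_N} ≥ ‖x N − xr N‖²_Q + ‖κ(x N) − ur N‖²_R. Define x⁺ k := x(k+1) for k < N, x⁺ N := f(x N, κ(x N)), u⁺ k := u(k+1) for k < N−1, u⁺(N−1) := κ(x N), and for a shift s ∈ ℕ define J_s(y, v) := ‖y N − xr(N+s)‖²_{Q_N} + ∑_{k=0}^{N−1} (‖y k − xr(k+s)‖²_Q + ‖v k − ur(k+s)‖²_R). Then J_1(x⁺, u⁺) ≤ J_0(x, u) − (‖x 0 − xr 0‖²_Q + ‖u 0 − ur 0‖²_R). (This is the one-step cost decrease inequality used to prove asymptotic stability in Theorem 4.) -/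
/-- The squared weighted norm `‖z‖²_M = zᵀ M z`. -/
def quadNorm {m : ℕ} (M : Matrix (Fin m) (Fin m) ℝ) (z : Fin m → ℝ) : ℝ :=
  dotProduct z (M.mulVec z)

/-- One-step cost decrease inequality for the shifted-and-appended trajectory,
used to prove asymptotic stability of the MPC law. -/
theorem mpc_one_step_cost_decrease
    {nx nu : ℕ} (N : ℕ) (hN : 1 ≤ N)
    (Q QN : Matrix (Fin nx) (Fin nx) ℝ) (R : Matrix (Fin nu) (Fin nu) ℝ)
    (xr : ℕ → (Fin nx → ℝ)) (ur : ℕ → (Fin nu → ℝ))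
    (f : (Fin nx → ℝ) → (Fin nu → ℝ) → (Fin nx → ℝ))
    (κ : (Fin nx → ℝ) → (Fin nu → ℝ))
    (x : ℕ → (Fin nx → ℝ)) (u : ℕ → (Fin nu → ℝ))
    (hdyn : ∀ k < N, x (k + 1) = f (x k) (u k))
    (hterm : quadNorm QN (x N - xr N) -
        quadNorm QN (f (x N) (κ (x N)) - xr (N + 1)) ≥
      quadNorm Q (x N - xr N) + quadNorm R (κ (x N) - ur N))
    (xp : ℕ → (Fin nx → ℝ)) (up : ℕ → (Fin nu → ℝ))
    (hxp : ∀ k < N, xp k = x (k + 1))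
    (hxpN : xp N = f (x N) (κ (x N)))
    (hup : ∀ k < N - 1, up k = u (k + 1))
    (hupN : up (N - 1) = κ (x N)) :
    quadNorm QN (xp N - xr (N + 1)) +
      ∑ k ∈ Finset.range N,
        (quadNorm Q (xp k - xr (k + 1)) + quadNorm R (up k - ur (k + 1))) ≤
    (quadNorm QN (x N - xr N) +
      ∑ k ∈ Finset.range N,
        (quadNorm Q (x k - xr k) + quadNorm R (u k - ur k))) -
      (quadNorm Q (x 0 - xr 0) + quadNorm R (u 0 - ur 0)) := by
  obtain ⟨M, rfl⟩ : ∃ M, N = M + 1 := ⟨N - 1, (Nat.succ_pred_eq_of_pos hN).symm⟩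
  have hsum1 : ∑ k ∈ Finset.range (M+1),
      (quadNorm Q (xp k - xr (k + 1)) + quadNorm R (up k - ur (k + 1)))
    = (∑ k ∈ Finset.range M,
        (quadNorm Q (x (k+1) - xr (k + 1)) + quadNorm R (u (k+1) - ur (k + 1))))
      + (quadNorm Q (x (M+1) - xr (M+1)) + quadNorm R (κ (x (M+1)) - ur (M+1))) := by
    rw [Finset.sum_range_succ]
    congr 1
    · apply Finset.sum_congr rfl
      intro k hk
      rw [Finset.mem_range] at hk
      rw [hxp k (by omega), hup k (by omega)]
    · rw [hxp M (by omega)]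
      have h2 : up M = κ (x (M+1)) := by simpa using hupN
      rw [h2]
  have hsum2 : ∑ k ∈ Finset.range (M+1),
      (quadNorm Q (x k - xr k) + quadNorm R (u k - ur k))
    = (∑ k ∈ Finset.range M,
        (quadNorm Q (x (k+1) - xr (k+1)) + quadNorm R (u (k+1) - ur (k+1))))
      + (quadNorm Q (x 0 - xr 0) + quadNorm R (u 0 - ur 0)) := by
    rw [Finset.sum_range_succ']
  rw [hsum1, hsum2, hxpN]
  linarith [hterm]
end

section
/- Let n N : ℕ, and for each k < N let φ_k : (Fin n → ℝ) → (Fin n → ℝ) be a map such that for each coordinate j the function x ↦ φ_k(x) j is convex on ℝⁿ and Fréchet differentiable. Let lo hi : ℕ → (Fin n → ℝ) define boxes X_k := B(lo k, hi k), let per-coordinate linearization points x⁰ : ℕ → Fin n → (Fin n → ℝ) satisfy x⁰ k j ∈ X_k, and let w̲ w̄ : Fin n → ℝ. Suppose for every k < N and every j: (i) hi(k+1) j ≥ φ_k(x) j + w̄ j for all x ∈ X_k, and (ii) lo(k+1) j ≤ φ_k(x⁰ k j) j + D_x(φ_k(·) j)(x⁰ k j)(x − x⁰ k j) + w̲ j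 for all x ∈ X_k. Then every sequence x : ℕ → (Fin n → ℝ) with x 0 ∈ X_0 and x(k+1) = φ_k(x k) + w k for some w k with w̲ j ≤ w k j ≤ w̄ j for all j, satisfies x k ∈ X_k for all k ≤ N. (This is the claim that the tube constructed by the robust MPC constraints contains all closed-loop trajectories of the disturbed system over the whole horizon.) -/
/-- The box `B(l,u)` in `ℝⁿ`. -/
def box {n : ℕ} (l u : Fin n → ℝ) : Set (Fin n → ℝ) :=
  {x : Fin n → ℝ | ∀ i, l i ≤ x i ∧ x i ≤ u i}

/-- A convex differentiable function lies above its tangent plane. -/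
lemma convexOn_tangent_le {E : Type*} [NormedAddCommGroup E] [NormedSpace ℝ E]
    {f : E → ℝ} {f' : E →L[ℝ] ℝ} {x₀ y : E}
    (hc : ConvexOn ℝ Set.univ f) (hd : HasFDerivAt f f' x₀) :
    f x₀ + f' (y - x₀) ≤ f y := by
  set g : ℝ → ℝ := fun t => f (x₀ + t • (y - x₀)) with hg
  have hgc : ConvexOn ℝ Set.univ g := by
    have hfun : g = f ∘ (AffineMap.lineMap x₀ y) := by
      funext t
      simp [g, Function.comp, AffineMap.lineMap_apply, add_comm]
    rw [hfun]
    simpa using hc.comp_affineMap (AffineMap.lineMap x₀ y)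
  have hline : HasDerivAt (fun t : ℝ => x₀ + t • (y - x₀)) (y - x₀) 0 := by
    simpa using ((hasDerivAt_id (0:ℝ)).smul_const (y - x₀)).const_add x₀
  have hgd : HasDerivAt g (f' (y - x₀)) 0 := by
    have hd' : HasFDerivAt f f' (x₀ + (0:ℝ) • (y - x₀)) := by simpa using hd
    have := hd'.comp_hasDerivAt 0 hline
    exact this
  have := hgc.le_slope_of_hasDerivAt (Set.mem_univ (0:ℝ)) (Set.mem_univ (1:ℝ)) one_pos hgd
  have hslope : slope g 0 1 = f y - f x₀ := by
    simp [slope_def_field, g]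
  rw [hslope] at this
  linarith

/-- The tube constructed by the robust MPC constraints contains all
closed-loop trajectories of the disturbed system over the whole horizon. -/
theorem robust_tube_contains_trajectories
    (n N : ℕ)
    (φ : ℕ → (Fin n → ℝ) → (Fin n → ℝ))
    (lo hi : ℕ → (Fin n → ℝ))
    (x0 : ℕ → Fin n → (Fin n → ℝ))
    (Dφ : ℕ → Fin n → ((Fin n → ℝ) →L[ℝ] ℝ))
    (hconv : ∀ k < N, ∀ j, ConvexOn ℝ Set.univ (fun x => φ k x j))
    (hderiv : ∀ k < N, ∀ j, HasFDerivAt (fun x => φ k x j) (Dφ k j) (x0 k j))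
    (hx0mem : ∀ k < N, ∀ j, x0 k j ∈ box (lo k) (hi k))
    (wlo whi : Fin n → ℝ)
    (hhi : ∀ k < N, ∀ j, ∀ x ∈ box (lo k) (hi k),
      φ k x j + whi j ≤ hi (k + 1) j)
    (hlo : ∀ k < N, ∀ j, ∀ x ∈ box (lo k) (hi k),
      lo (k + 1) j ≤ φ k (x0 k j) j + Dφ k j (x - x0 k j) + wlo j)
    (x w : ℕ → (Fin n → ℝ))
    (hinit : x 0 ∈ box (lo 0) (hi 0))
    (hdyn : ∀ k < N, x (k + 1) = φ k (x k) + w k)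
    (hw : ∀ k < N, ∀ j, wlo j ≤ w k j ∧ w k j ≤ whi j) :
    ∀ k ≤ N, x k ∈ box (lo k) (hi k) := by
  intro k hk
  induction k with
  | zero => exact hinit
  | succ k ih =>
    have hkN : k < N := Nat.lt_of_succ_le hk
    have hxk : x k ∈ box (lo k) (hi k) := ih (le_of_lt hkN)
    intro j
    have hxeq : x (k + 1) j = φ k (x k) j + w k j := by
      rw [hdyn k hkN]; rfl
    constructor
    · have htan : φ k (x0 k j) j + Dφ k j (x k - x0 k j) ≤ φ k (x k) j :=
        convexOn_tangent_le (hconv k hkN j) (hderiv k hkN j)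
      have h1 := hlo k hkN j (x k) hxk
      have hwl := (hw k hkN j).1
      rw [hxeq]; linarith
    · have h2 := hhi k hkN j (x k) hxk
      have hwh := (hw k hkN j).2
      rw [hxeq]; linarith
end
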